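/- arXiv:1904.00067 — 4 statements merged into one kernel-verified Lean document; each statement's English description precedes it below -/
import Mathlib

section
/- Let B denote the set of partitions in which every part appears an even number of times (equivalently μ₂ᵢ₋₁ = μ₂ᵢ for all i ≥ 1), and for r ≥ 0 let B_r denote the set of partitions λ such that there exists μ ∈ B with μ ⊆ λ, λ − μ a horizontal strip, and |λ| − |μ| = r. Then for every partition λ with largest part λ₁ ≤ p, λ belongs to B_r for exactly one r ∈ {0, 1, ..., p}. In other words, the set {λ : λ₁ ≤ p} is the disjoint union of the sets {λ ∈ B_r : λ₁ ≤ p} for r = 0, 1, ..., p. -/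
/-- A partition: weakly decreasing, finitely supported sequence of naturals (0-indexed parts). -/
structure Ptn where
  f : ℕ → ℕ
  mono : ∀ ⦃i j : ℕ⦄, i ≤ j → f j ≤ f i
  supp : ∃ N, ∀ i, N ≤ i → f i = 0

namespace Ptn

/-- The weight |λ| = sum of the parts. -/
noncomputable def wt (l : Ptn) : ℕ := ∑ᶠ i, l.f i

/-- The length ℓ(λ) = number of nonzero parts. -/
noncomputable def len (l : Ptn) : ℕ := Set.ncard {i | l.f i ≠ 0}

/-- λ ∈ B: every part appears an even number of times, i.e. λ_{2i-1} = λ_{2i} (1-indexed). -/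
def inB (l : Ptn) : Prop := ∀ i, l.f (2 * i) = l.f (2 * i + 1)

/-- Containment of Young diagrams. -/
def sub (m l : Ptn) : Prop := ∀ i, m.f i ≤ l.f i

/-- For μ ⊆ λ, the skew diagram λ − μ is a horizontal strip iff λ_{i+1} ≤ μ_i for all i. -/
def hstrip (m l : Ptn) : Prop := ∀ i, l.f (i + 1) ≤ m.f i

/-- λ ∈ B_r: λ is obtained from some μ ∈ B by adjoining a horizontal strip of length r. -/
def inBr (r : ℕ) (l : Ptn) : Prop :=
  ∃ m : Ptn, inB m ∧ sub m l ∧ hstrip m l ∧ l.wt = m.wt + r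

/-- The conjugate partition: λ'_{i+1} = #{j : λ_j ≥ i+1} (0-indexed). -/
noncomputable def conj (l : Ptn) (i : ℕ) : ℕ := Set.ncard {j | i + 1 ≤ l.f j}

end Ptn

/-!
With rows indexed from 0: if `μ ∈ B`, `μ ⊆ λ` and `λ/μ` is a horizontal strip, then
`λ_{2k+1} ≤ μ_{2k} = μ_{2k+1} ≤ λ_{2k+1}`, so `μ` is forced: it lowers every row `λ_{2k}` to
`λ_{2k+1}`. Hence `λ` lies in `B_r` for the single value `r = |λ| - |μ|`, and `r ≤ λ_0` because a
horizontal strip over `μ` has at most `∑ (λ_i - λ_{i+1}) = λ_0` boxes.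
-/

open Finset

namespace Ptn

theorem f_injective : Function.Injective Ptn.f := by
  rintro ⟨f, _, _⟩ ⟨g, _, _⟩ rfl
  rfl

theorem wt_eq_sum_range {l : Ptn} {N : ℕ} (hN : ∀ i, N ≤ i → l.f i = 0) :
    l.wt = ∑ i ∈ range N, l.f i := by
  refine finsum_eq_finsetSum_of_support_subset _ fun i hi => ?_
  by_contra hiN
  exact hi (hN i (by simpa using hiN))

theorem exists_common_support_bound (m l : Ptn) :
    ∃ N, (∀ i, N ≤ i → m.f i = 0) ∧ (∀ i, N ≤ i → l.f i = 0) := by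
  obtain ⟨M, hM⟩ := m.supp
  obtain ⟨L, hL⟩ := l.supp
  exact ⟨M + L, fun i hi => hM i (by omega), fun i hi => hL i (by omega)⟩

theorem wt_le_wt_of_sub {m l : Ptn} (h : m.sub l) : m.wt ≤ l.wt := by
  obtain ⟨N, hm, hl⟩ := exists_common_support_bound m l
  rw [wt_eq_sum_range hm, wt_eq_sum_range hl]
  exact sum_le_sum fun i _ => h i

theorem wt_le_wt_add_of_hstrip {m l : Ptn} (h : m.hstrip l) : l.wt ≤ m.wt + l.f 0 :=
  have ⟨N, hm, hl⟩ := exists_common_support_bound m l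
  calc l.wt = ∑ i ∈ range (N + 1), l.f i := wt_eq_sum_range fun i hi => hl i (by omega)
    _ = ∑ i ∈ range N, l.f (i + 1) + l.f 0 := sum_range_succ' _ _
    _ ≤ ∑ i ∈ range N, m.f i + l.f 0 := by gcongr with i; exact h i
    _ = m.wt + l.f 0 := by rw [wt_eq_sum_range hm]

def coreB (l : Ptn) : Ptn where
  f i := l.f (2 * (i / 2) + 1)
  mono _ _ _ := l.mono (by omega)
  supp :=
    have ⟨N, hN⟩ := l.supp
    ⟨N, fun i hi => hN _ (by omega)⟩

theorem inB_coreB (l : Ptn) : l.coreB.inB := fun k => by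
  simp only [coreB]
  congr 2
  omega

theorem sub_coreB (l : Ptn) : l.coreB.sub l := fun _ => l.mono (by omega)

theorem hstrip_coreB (l : Ptn) : l.coreB.hstrip l := fun _ => l.mono (by omega)

theorem eq_coreB {m l : Ptn} (hB : m.inB) (hs : m.sub l) (hh : m.hstrip l) : m = l.coreB := by
  have hpair (k : ℕ) : m.f (2 * k) = l.f (2 * k + 1) ∧ m.f (2 * k + 1) = l.f (2 * k + 1) := by
    have := hB k
    have := hh (2 * k)
    have := hs (2 * k + 1)
    omega
  refine f_injective (funext fun i => ?_)
  obtain ⟨k, rfl | rfl⟩ := Nat.even_or_odd' i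
  · simpa [coreB] using (hpair k).1
  · simpa [coreB, show (2 * k + 1) / 2 = k by omega] using (hpair k).2

theorem inBr_iff_wt_eq {r : ℕ} {l : Ptn} : l.inBr r ↔ l.wt = l.coreB.wt + r := by
  constructor
  · rintro ⟨m, hB, hs, hh, hw⟩
    rwa [eq_coreB hB hs hh] at hw
  · exact fun hw => ⟨l.coreB, l.inB_coreB, l.sub_coreB, l.hstrip_coreB, hw⟩

end Ptn

/-- every partition λ with λ₁ ≤ p lies in B_r for exactly one r ∈ {0,…,p}. -/
theorem unique_strip_length (p : ℕ) (l : Ptn) (h : l.f 0 ≤ p) :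
    ∃! r : ℕ, r ≤ p ∧ l.inBr r := by
  have hcore_le := Ptn.wt_le_wt_of_sub l.sub_coreB
  have hstrip_le := Ptn.wt_le_wt_add_of_hstrip l.hstrip_coreB
  refine ⟨l.wt - l.coreB.wt, ⟨by omega, Ptn.inBr_iff_wt_eq.2 (by omega)⟩, ?_⟩
  rintro r ⟨-, hr⟩
  rw [Ptn.inBr_iff_wt_eq] at hr
  omega
end

section
/- Identity of formal power series expressing the osp(2n+2k+1|2n) superdimension result: Σ over all partitions λ with λ₁ ≤ p of s_λ evaluated at (t,...,t | −t,...,−t) with n+k entries t and n entries −t equals Σ over partitions λ with λ₁ ≤ p and ℓ(λ) ≤ k of dim V^λ_{gl(k)} · t^{|λ|}, i.e., the t-dimension of the so(2k+1) representation [0,...,0,p]. -/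
/-- h_k(1^m | (-1)^n): the specialization of the supersymmetric complete homogeneous
function h_k(x|y) = Σ_{a+b=k} h_a(x) e_b(y) at x_i = 1 (m variables), y_j = -1 (n variables);
h_a(1^m) = C(a+m-1, a) and e_b((-1)^n) = (-1)^b C(n,b).  Zero for negative k. -/
noncomputable def hval (m n : ℕ) (k : ℤ) : ℤ :=
  if k < 0 then 0 else
    ∑ b ∈ Finset.range (k.toNat + 1),
      ((k.toNat - b + m - 1).choose (k.toNat - b) : ℤ) * (-1) ^ b * (n.choose b : ℤ)

/-- Jacobi–Trudi determinant of size N for the parts f: the specialization s_λ(1^m | (-1)^n)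
of the supersymmetric Schur function, valid whenever N ≥ ℓ(λ). -/
noncomputable def sdimF (m n N : ℕ) (f : ℕ → ℕ) : ℤ :=
  Matrix.det (Matrix.of fun i j : Fin N => hval m n ((f i.1 : ℤ) - (i.1 : ℤ) + (j.1 : ℤ)))

/-- The superdimension sdim V^λ_{gl(m|n)} = s_λ(1,…,1 | −1,…,−1). -/
noncomputable def sdim (m n : ℕ) (l : Ptn) : ℤ := sdimF m n l.len l.f

/-- dim V^λ_{gl(k)} = s_λ(1,…,1) (k ones). -/
noncomputable def dimGL (k : ℕ) (l : Ptn) : ℤ := sdimF k 0 l.len l.f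

/-! Specialised at `x = 1`, `y = -1`, the supersymmetric `h_a(x|y)` are the coefficients of
`(1 - t)^n / (1 - t)^m`, so `n` of the `x`'s cancel against the `y`'s and `sdim (n + k) n λ` has the
same Jacobi–Trudi matrix as `dim V^λ_{gl(k)}`. That determinant vanishes once `ℓ(λ) > k`, because
then the `ℓ(λ)` columns are linearly dependent through the `k + 1` coefficients of `(1 - t)^k`. -/

open PowerSeries

section PowerSeries

variable {S : Type*} [CommRing S]

theorem coeff_invOneSubPow (m c : ℕ) :
    coeff c (invOneSubPow S m).val = ((c + m - 1).choose c : S) := by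
  rcases m with _ | d
  · rcases c with _ | c <;> simp [invOneSubPow_zero, coeff_one]
  · rw [invOneSubPow_val_succ_eq_mk_add_choose, coeff_mk, ← add_assoc, Nat.add_sub_cancel,
      Nat.choose_symm_add, add_comm]

theorem coeff_one_sub_X_pow (n b : ℕ) :
    coeff b ((1 - X : S⟦X⟧) ^ n) = (-1) ^ b * n.choose b := by
  have h : (1 - X : S⟦X⟧) ^ n = rescale (-1) (((1 + Polynomial.X) ^ n : Polynomial S) : S⟦X⟧) := by
    simp [sub_eq_add_neg]
  rw [h, coeff_rescale, Polynomial.coeff_coe, Polynomial.coeff_one_add_X_pow]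

end PowerSeries

theorem hval_of_neg (m n : ℕ) {a : ℤ} (ha : a < 0) : hval m n a = 0 :=
  if_pos ha

theorem hval_natCast (m n a : ℕ) :
    hval m n a = coeff a ((invOneSubPow ℤ m).val * (1 - X) ^ n) := by
  rw [mul_comm, coeff_mul, Finset.Nat.sum_antidiagonal_eq_sum_range_succ
    (fun b c => coeff b ((1 - X : ℤ⟦X⟧) ^ n) * coeff c (invOneSubPow ℤ m).val)]
  simp only [hval, Int.natCast_nonneg, not_lt.mpr, if_false, Int.toNat_natCast,
    coeff_one_sub_X_pow, coeff_invOneSubPow]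
  exact Finset.sum_congr rfl fun b _ => by ring

theorem hval_add_add (m n j : ℕ) : hval (j + m) (j + n) = hval m n := by
  have hinv : (invOneSubPow ℤ (m + j)).val * (1 - X) ^ j = (invOneSubPow ℤ m).val := by
    rw [mul_comm, one_sub_pow_mul_invOneSubPow_val_add_eq_invOneSubPow_val]
  funext a
  rcases lt_or_ge a 0 with ha | ha
  · rw [hval_of_neg _ _ ha, hval_of_neg _ _ ha]
  · lift a to ℕ using ha
    rw [hval_natCast, hval_natCast, pow_add, ← mul_assoc, add_comm j m, hinv]

theorem sdimF_add_add (m n j N : ℕ) (f : ℕ → ℕ) :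
    sdimF (j + m) (j + n) N f = sdimF m n N f := by
  rw [sdimF, sdimF, hval_add_add]

theorem hval_self_of_pos (m : ℕ) {a : ℕ} (ha : 0 < a) : hval m m a = 0 := by
  rw [hval_natCast, ← invOneSubPow_inv_eq_one_sub_pow, Units.inv_eq_val_inv, Units.mul_inv,
    coeff_one, if_neg ha.ne']

theorem sum_range_hval_mul_coeff_one_sub_X_pow (k N c : ℕ) (hN : k < N) :
    ∑ b ∈ Finset.range N, hval k 0 ((c : ℤ) - b) * coeff b ((1 - X : ℤ⟦X⟧) ^ k) = hval k k c := by
  set g : ℕ → ℤ := fun b => hval k 0 ((c : ℤ) - b) * coeff b ((1 - X : ℤ⟦X⟧) ^ k)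
  have hsuppN : Function.support g ⊆ ↑(Finset.range N) := by
    intro b hb
    by_contra hbN
    simp only [Finset.coe_range, Set.mem_Iio, not_lt] at hbN
    exact hb (by simp [g, coeff_one_sub_X_pow, Nat.choose_eq_zero_of_lt (hN.trans_le hbN)])
  have hsuppc : Function.support g ⊆ ↑(Finset.range (c + 1)) := by
    intro b hb
    by_contra hbc
    simp only [Finset.coe_range, Set.mem_Iio, not_lt] at hbc
    exact hb (by simp [g, hval_of_neg k 0 (show (c : ℤ) - b < 0 by omega)])
  rw [← finsum_eq_sum_of_support_subset g hsuppN, finsum_eq_sum_of_support_subset g hsuppc,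
    hval_natCast, mul_comm, coeff_mul, Finset.Nat.sum_antidiagonal_eq_sum_range_succ
      (fun b a => coeff b ((1 - X : ℤ⟦X⟧) ^ k) * coeff a (invOneSubPow ℤ k).val)]
  refine Finset.sum_congr rfl fun b hb => ?_
  have hbc : b ≤ c := Nat.lt_succ_iff.mp (Finset.mem_range.mp hb)
  dsimp only [g]
  rw [← Nat.cast_sub hbc, hval_natCast, pow_zero, mul_one, mul_comm]

-- The reversed coefficients of `(1 - X)^k` form a kernel vector: row `i` pairs with it to the
-- coefficient of `X^(f i + N - 1 - i)`, a positive degree, in `(1 - X)^(-k) * (1 - X)^k = 1`.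
theorem sdimF_eq_zero_of_lt (k N : ℕ) (f : ℕ → ℕ) (hN : k < N) (hf : ∀ i < N, 0 < f i) :
    sdimF k 0 N f = 0 := by
  classical
  obtain ⟨N, rfl⟩ : ∃ N', N = N' + 1 := ⟨N - 1, by omega⟩
  refine Matrix.exists_mulVec_eq_zero_iff.mp
    ⟨fun j => coeff (N - j) ((1 - X : ℤ⟦X⟧) ^ k), fun hv => ?_, funext fun i => ?_⟩
  · simpa [coeff_one_sub_X_pow] using congr_fun hv (Fin.last N)
  · obtain ⟨c, hc_def⟩ : ∃ c, c = f i + (N - i) := ⟨_, rfl⟩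
    have hc : 0 < c := by have := hf i i.2; omega
    have hrow : ∀ j : Fin (N + 1),
        hval k 0 ((f i : ℤ) - i + (Fin.rev j : ℕ)) * coeff (N - (Fin.rev j : ℕ)) ((1 - X) ^ k) =
          hval k 0 ((c : ℤ) - j) * coeff j ((1 - X : ℤ⟦X⟧) ^ k) := by
      intro j
      have hj := j.is_le
      have hi := i.is_le
      rw [Fin.val_rev, show N - (N + 1 - (j + 1)) = j by omega,
        show (f i : ℤ) - i + (N + 1 - (j + 1) : ℕ) = c - j by omega]
    simp only [Matrix.mulVec, dotProduct, Matrix.of_apply, Pi.zero_apply]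
    rw [← Equiv.sum_comp Fin.revPerm]
    simp only [Fin.revPerm_apply]
    rw [Finset.sum_congr rfl fun j _ => hrow j,
      Fin.sum_univ_eq_sum_range (fun b => hval k 0 ((c : ℤ) - b) * coeff b ((1 - X : ℤ⟦X⟧) ^ k)),
      sum_range_hval_mul_coeff_one_sub_X_pow k (N + 1) c hN, hval_self_of_pos k hc]

theorem Ptn.pos_of_lt_len (l : Ptn) {i : ℕ} (hi : i < l.len) : 0 < l.f i := by
  by_contra! h0
  have hsub : {j | l.f j ≠ 0} ⊆ Set.Iio i := fun j hj => by
    by_contra hij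
    exact hj (Nat.le_zero.mp ((l.mono (not_lt.mp hij)).trans h0))
  have := Set.ncard_le_ncard hsub (Set.finite_Iio i)
  rw [Set.ncard_Iio_nat] at this
  exact absurd hi (not_lt.mpr this)

theorem sdim_add_self (n k : ℕ) (l : Ptn) : sdim (n + k) n l = dimGL k l :=
  sdimF_add_add k 0 n l.len l.f

theorem dimGL_eq_zero_of_lt_len (k : ℕ) (l : Ptn) (h : k < l.len) : dimGL k l = 0 :=
  sdimF_eq_zero_of_lt k l.len l.f h fun _ hi => l.pos_of_lt_len hi

-- The coefficient of `t^d`, using `s_λ(t,…,t | -t,…,-t) = sdim (n + k) n λ * t^|λ|`.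
/-- Σ_{λ₁≤p} s_λ(t,…,t | −t,…,−t)  (n+k entries t, n entries −t) equals
Σ_{λ₁≤p, ℓ(λ)≤k} dim V^λ_{gl(k)} t^{|λ|}, i.e. the t-dimension of the so(2k+1) irrep
[0,…,0,p].  Since s_λ is homogeneous of degree |λ|, this is the coefficientwise identity: -/
theorem sdim_osp_so (n k p d : ℕ) :
    (∑ᶠ (l : Ptn) (_ : l.f 0 ≤ p ∧ l.wt = d), sdim (n + k) n l) =
    (∑ᶠ (l : Ptn) (_ : l.f 0 ≤ p ∧ l.len ≤ k ∧ l.wt = d), dimGL k l) := by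
  classical
  refine finsum_congr fun l => ?_
  rw [sdim_add_self, finsum_eq_if, finsum_eq_if]
  by_cases hl : l.len ≤ k
  · simp [hl]
  · simp [hl, dimGL_eq_zero_of_lt_len k l (not_le.mp hl)]
end

section
/- If λ ∈ B_r (λ is obtained from some μ ∈ B by adjoining a horizontal strip of length r), then with the canonical doubled partition ν defined by ν₂ᵢ₋₁ = ν₂ᵢ = λ₂ᵢ, one has |λ| − |ν| = r; i.e., the strip length r is uniquely determined by λ, so the sets B_r for distinct r are pairwise disjoint. -/
/-!
Interlacing pins the base down: if `μ ∈ B` lies under `λ` with `λ / μ` a horizontal strip, then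
`μ₂ᵢ = μ₂ᵢ₊₁ ≤ λ₂ᵢ₊₁ ≤ μ₂ᵢ` (0-indexed), so `μ` is the doubled partition `ν` read off from `λ`, and
the strip length is `|λ| - |ν|`.
-/

namespace Ptn

theorem ext {m n : Ptn} (h : ∀ i, m.f i = n.f i) : m = n := by
  obtain ⟨f, _, _⟩ := m
  obtain ⟨g, _, _⟩ := n
  obtain rfl : f = g := funext h
  rfl

theorem f_eq_of_inB_of_hstrip {m l : Ptn} (hB : m.inB) (hsub : m.sub l) (hstr : m.hstrip l)
    (i : ℕ) : m.f i = l.f (2 * (i / 2) + 1) := by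
  have pair (k : ℕ) : m.f (2 * k) = l.f (2 * k + 1) ∧ m.f (2 * k + 1) = l.f (2 * k + 1) := by
    have := hsub (2 * k + 1)
    have := hstr (2 * k)
    have := hB k
    omega
  obtain ⟨k, rfl | rfl⟩ := Nat.even_or_odd' i
  · simpa using (pair k).1
  · simpa [Nat.mul_add_div] using (pair k).2

theorem wt_eq_of_inBr {r : ℕ} {l : Ptn} (h : l.inBr r) (nu : Ptn)
    (hnu : ∀ i, nu.f i = l.f (2 * (i / 2) + 1)) : l.wt = nu.wt + r := by
  obtain ⟨m, hB, hsub, hstr, hwt⟩ := h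
  obtain rfl : m = nu := ext fun i => (f_eq_of_inB_of_hstrip hB hsub hstr i).trans (hnu i).symm
  exact hwt

end Ptn

/-- if λ ∈ B_r then, with ν the canonical doubled partition of λ,
|λ| − |ν| = r; hence r is determined by λ and the B_r are pairwise disjoint. -/
theorem Br_strip_length_unique (r : ℕ) (l : Ptn) (h : l.inBr r) :
    (∀ nu : Ptn, (∀ i, nu.f i = l.f (2 * (i / 2) + 1)) → l.wt = nu.wt + r) ∧
    (∀ s : ℕ, l.inBr s → s = r) := by
  refine ⟨Ptn.wt_eq_of_inBr h, fun s hs => ?_⟩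
  obtain ⟨m, hB, hsub, hstr, hwt⟩ := h
  have := Ptn.wt_eq_of_inBr hs m (Ptn.f_eq_of_inB_of_hstrip hB hsub hstr)
  omega
end

section
/- If λ is a partition and μ ∈ B satisfies λᵢ₊₁ ≤ μᵢ ≤ λᵢ for all i (so λ − μ is a horizontal strip), then necessarily μ₂ᵢ₋₁ = μ₂ᵢ = λ₂ᵢ for every i ≥ 1; in particular μ is uniquely determined by λ. -/
namespace Ptn

variable {l m : Ptn}

/-- The pair `μ_{2k} = μ_{2k+1}` is squeezed: `λ_{2k+1} ≤ μ_{2k} = μ_{2k+1} ≤ λ_{2k+1}`. -/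
theorem inB.f_pair_eq (hB : m.inB) (hstrip : m.hstrip l) (hsub : m.sub l) (k : ℕ) :
    m.f (2 * k) = l.f (2 * k + 1) ∧ m.f (2 * k + 1) = l.f (2 * k + 1) := by
  have := hB k
  have := hstrip (2 * k)
  have := hsub (2 * k + 1)
  omega

theorem inB.f_eq_of_hstrip (hB : m.inB) (hstrip : m.hstrip l) (hsub : m.sub l) (i : ℕ) :
    m.f i = l.f (2 * (i / 2) + 1) := by
  obtain ⟨k, rfl | rfl⟩ := Nat.even_or_odd' i
  · rw [Nat.mul_div_cancel_left k two_pos]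
    exact (hB.f_pair_eq hstrip hsub k).1
  · rw [show (2 * k + 1) / 2 = k by omega]
    exact (hB.f_pair_eq hstrip hsub k).2

end Ptn

/-- if μ ∈ B and λ_{i+1} ≤ μ_i ≤ λ_i for all i, then μ_{2i-1} = μ_{2i} = λ_{2i}
(1-indexed), i.e. μ is the canonical doubled partition; in particular μ is uniquely
determined by λ. -/
theorem B_interlacing_unique (l m : Ptn) (hB : m.inB)
    (hstrip : ∀ i, l.f (i + 1) ≤ m.f i) (hsub : ∀ i, m.f i ≤ l.f i) :
    (∀ i, m.f i = l.f (2 * (i / 2) + 1)) ∧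
    (∀ m' : Ptn, m'.inB → (∀ i, l.f (i + 1) ≤ m'.f i) → (∀ i, m'.f i ≤ l.f i) →
      ∀ i, m'.f i = m.f i) := by
  refine ⟨hB.f_eq_of_hstrip hstrip hsub, fun m' hB' hstrip' hsub' i => ?_⟩
  rw [hB'.f_eq_of_hstrip hstrip' hsub' i, hB.f_eq_of_hstrip hstrip hsub i]
end
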